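/- arXiv:math/0106191 — 6 statements merged into one kernel-verified Lean document; each statement's English description precedes it below -/
import Mathlib

section
/- For every n ≥ 1 and all compositions I and J of n, if J' denotes the conjugate composition of J (the unique composition of n with Des(J') = {1,…,n−1} \ Des(J)), then the noncommutative (q,t)-Kostka monomial satisfies k̃_{I,J'}(q,t) = k̃_{I,J}(t,q), i.e. applying the ring automorphism of ℤ[q,t] exchanging q and t to k̃_{I,J} yields k̃_{I,J'}. -/
open Finset

instance {n : ℕ} : DecidableEq (Composition n) := fun a b =>
  decidable_of_iff (a.blocks = b.blocks) ⟨fun h => Composition.ext h, fun h => congrArg _ h⟩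

/-- The descent set of a composition of `n`: the set of proper partial sums
`i₁, i₁+i₂, …, i₁+⋯+i_{ℓ(I)−1}`, a subset of `{1,…,n−1}`. -/
def Des {n : ℕ} (I : Composition n) : Finset ℕ :=
  (Finset.Ioo 0 I.length).image I.sizeUpTo

/-- `d I k` is the number of descents of `I` that are strictly less than `k`. -/
def d {n : ℕ} (I : Composition n) (k : ℕ) : ℕ :=
  ((Des I).filter (· < k)).card

/-- `v(I,k) ∈ ℤ[q,t]`, where `q = X 0` and `t = X 1`:
`t^{1+d(I,k)}` if `k ∈ Des I`, and `q^{k−d(I,k)}` otherwise. -/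
noncomputable def v {n : ℕ} (I : Composition n) (k : ℕ) : MvPolynomial (Fin 2) ℤ :=
  if k ∈ Des I then MvPolynomial.X 1 ^ (1 + d I k) else MvPolynomial.X 0 ^ (k - d I k)

/-- The noncommutative `(q,t)`-Kostka monomial `k̃_{I,J}(q,t) = ∏_{k ∈ Des I} v(J,k)`. -/
noncomputable def kostka {n : ℕ} (I J : Composition n) : MvPolynomial (Fin 2) ℤ :=
  ∏ k ∈ Des I, v J k

lemma Des_subset {n : ℕ} (J : Composition n) : Des J ⊆ Finset.Ioo 0 n := by
  intro x hx
  simp only [Des, mem_image, mem_Ioo] at hx ⊢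
  obtain ⟨i, ⟨hi0, hil⟩, rfl⟩ := hx
  constructor
  · calc 0 = J.sizeUpTo 0 := (J.sizeUpTo_zero).symm
      _ < J.sizeUpTo 1 := J.sizeUpTo_strict_mono (lt_of_le_of_lt (Nat.zero_le _) hil)
      _ ≤ J.sizeUpTo i := J.monotone_sizeUpTo hi0
  · calc J.sizeUpTo i < J.sizeUpTo (i+1) := J.sizeUpTo_strict_mono hil
      _ ≤ n := J.sizeUpTo_le _

lemma filter_subset_Ioo {n : ℕ} (J : Composition n) (k : ℕ) :
    (Des J).filter (· < k) ⊆ Finset.Ioo 0 k := by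
  intro x hx
  simp only [mem_filter, mem_Ioo] at hx ⊢
  exact ⟨(mem_Ioo.1 (Des_subset J hx.1)).1, hx.2⟩

lemma d_le {n : ℕ} (J : Composition n) (k : ℕ) : d J k ≤ k - 1 := by
  have := Finset.card_le_card (filter_subset_Ioo J k)
  simpa [d, Nat.card_Ioo] using this

lemma d_conj {n : ℕ} (J J' : Composition n) (hJ' : Des J' = Finset.Ioo 0 n \ Des J)
    {k : ℕ} (hk : k ∈ Finset.Ioo 0 n) : d J' k = (k - 1) - d J k := by
  obtain ⟨hk0, hkn⟩ := mem_Ioo.1 hk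
  have hset : (Des J').filter (· < k) = Finset.Ioo 0 k \ ((Des J).filter (· < k)) := by
    ext x
    simp only [hJ', mem_filter, mem_sdiff, mem_Ioo]
    constructor
    · rintro ⟨⟨⟨h0, _⟩, hnd⟩, hlt⟩
      exact ⟨⟨h0, hlt⟩, fun h => hnd h.1⟩
    · rintro ⟨⟨h0, hlt⟩, hnd⟩
      exact ⟨⟨⟨h0, hlt.trans hkn⟩, fun h => hnd ⟨h, hlt⟩⟩, hlt⟩
  rw [d, hset, Finset.card_sdiff_of_subset (filter_subset_Ioo J k), Nat.card_Ioo]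
  rfl

/-- For `n ≥ 1` and compositions `I, J` of `n`, if `J'` is the conjugate composition of `J`
(the unique composition with `Des J' = {1,…,n−1} \ Des J`), then
`k̃_{I,J'}(q,t) = k̃_{I,J}(t,q)`: applying the automorphism of `ℤ[q,t]` exchanging `q` and `t`
to `k̃_{I,J}` yields `k̃_{I,J'}`. -/
theorem kostka_conjugate_swap {n : ℕ} (hn : 1 ≤ n) (I J J' : Composition n)
    (hJ' : Des J' = Finset.Ioo 0 n \ Des J) :
    kostka I J' =
      (MvPolynomial.renameEquiv ℤ (Equiv.swap (0 : Fin 2) 1)) (kostka I J) := by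
  unfold kostka
  rw [map_prod]
  refine Finset.prod_congr rfl fun k hk => ?_
  have hkIoo : k ∈ Finset.Ioo 0 n := Des_subset I hk
  obtain ⟨hk0, hkn⟩ := mem_Ioo.1 hkIoo
  have hd := d_conj J J' hJ' hkIoo
  have hle := d_le J k
  by_cases hJk : k ∈ Des J
  · have hJ'k : k ∉ Des J' := by simp [hJ', hJk]
    simp only [v, if_pos hJk, if_neg hJ'k, map_pow, MvPolynomial.renameEquiv_apply,
      MvPolynomial.rename_X, Equiv.swap_apply_right]
    congr 1
    omega
  · have hJ'k : k ∈ Des J' := by simp [hJ', hJk, hkIoo]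
    simp only [v, if_neg hJk, if_pos hJ'k, map_pow, MvPolynomial.renameEquiv_apply,
      MvPolynomial.rename_X, Equiv.swap_apply_left]
    congr 1
    omega
end

section
/- For every n ≥ 1 and all compositions I and J of n, if I' denotes the conjugate composition of I (the unique composition of n with Des(I') = {1,…,n−1} \ Des(I)), then k̃_{I,J}(q,t) · k̃_{I',J}(q,t) = q^{C(n+1−ℓ(J),2)} · t^{C(ℓ(J),2)} in ℤ[q,t], where C(a,2) denotes the binomial coefficient a choose 2. Equivalently, ∏_{k=1}^{n−1} v(J,k) = q^{C(n+1−ℓ(J),2)} t^{C(ℓ(J),2)}. -/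
open Finset

lemma sizeUpTo_lt_sizeUpTo {n : ℕ} (c : Composition n) {i j : ℕ} (hij : i < j)
    (hj : j ≤ c.length) : c.sizeUpTo i < c.sizeUpTo j :=
  lt_of_lt_of_le (c.sizeUpTo_strict_mono (lt_of_lt_of_le hij hj))
    (c.monotone_sizeUpTo hij)

lemma des_subset {n : ℕ} (I : Composition n) : Des I ⊆ Finset.Ioo 0 n := by
  intro k hk
  simp only [Des, Finset.mem_image, Finset.mem_Ioo] at hk ⊢
  obtain ⟨i, ⟨hi0, hil⟩, rfl⟩ := hk
  constructor
  · have := sizeUpTo_lt_sizeUpTo I hi0 hil.le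
    simpa [I.sizeUpTo_zero] using this
  · have := sizeUpTo_lt_sizeUpTo I hil le_rfl
    simpa [I.sizeUpTo_length] using this

lemma card_des {n : ℕ} (J : Composition n) : (Des J).card = J.length - 1 := by
  have hinj : Set.InjOn J.sizeUpTo (Finset.Ioo 0 J.length) := by
    intro a ha b hb hab
    simp only [Finset.coe_Ioo, Set.mem_Ioo] at ha hb
    rcases lt_trichotomy a b with h | h | h
    · exact absurd hab (sizeUpTo_lt_sizeUpTo J h hb.2.le).ne
    · exact h
    · exact absurd hab.symm (sizeUpTo_lt_sizeUpTo J h ha.2.le).ne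
  rw [Des, Finset.card_image_of_injOn hinj, Nat.card_Ioo]
  omega

lemma sum_card_filter_lt (S : Finset ℕ) :
    ∑ k ∈ S, (S.filter (· < k)).card = S.card.choose 2 := by
  induction S using Finset.strongInduction with
  | _ S ih =>
    rcases S.eq_empty_or_nonempty with rfl | hS
    · simp
    · obtain ⟨m, hm, hmax⟩ := S.exists_max_image id hS
      have hS' : S = insert m (S.erase m) := (Finset.insert_erase hm).symm
      have hme : m ∉ S.erase m := Finset.notMem_erase _ _
      rw [hS', Finset.sum_insert hme]
      have h1 : (insert m (S.erase m)).filter (· < m) = S.erase m := by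
        rw [← hS']
        ext x
        simp only [Finset.mem_filter, Finset.mem_erase]
        constructor
        · rintro ⟨hx, hxm⟩; exact ⟨hxm.ne, hx⟩
        · rintro ⟨hxm, hx⟩; exact ⟨hx, lt_of_le_of_ne (hmax x hx) hxm⟩
      have h2 : ∀ k ∈ S.erase m, ((insert m (S.erase m)).filter (· < k)).card
          = ((S.erase m).filter (· < k)).card := by
        intro k hk
        congr 1
        rw [Finset.filter_insert, if_neg]
        simp only [not_lt]
        exact hmax k (Finset.mem_of_mem_erase hk)
      rw [h1, Finset.sum_congr rfl h2, ih (S.erase m) (Finset.erase_ssubset hm)]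
      have hc : S.card = (S.erase m).card + 1 := by
        rw [Finset.card_erase_of_mem hm]
        have := Finset.card_pos.mpr hS
        omega
      rw [← hS', hc, Nat.choose_succ_succ, Nat.choose_one_right]

lemma sum_card_filter_le (S : Finset ℕ) :
    ∑ k ∈ S, (S.filter (· ≤ k)).card = (S.card + 1).choose 2 := by
  have : ∀ k ∈ S, (S.filter (· ≤ k)).card = (S.filter (· < k)).card + 1 := by
    intro k hk
    have : S.filter (· ≤ k) = insert k (S.filter (· < k)) := by
      ext x
      simp only [Finset.mem_filter, Finset.mem_insert]
      constructor
      · rintro ⟨hx, hxk⟩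
        rcases eq_or_lt_of_le hxk with h | h
        · exact Or.inl h
        · exact Or.inr ⟨hx, h⟩
      · rintro (rfl | ⟨hx, hxk⟩)
        · exact ⟨hk, le_rfl⟩
        · exact ⟨hx, hxk.le⟩
    rw [this, Finset.card_insert_of_notMem (by simp)]
  rw [Finset.sum_congr rfl this, Finset.sum_add_distrib, sum_card_filter_lt,
    Finset.sum_const, smul_eq_mul, mul_one, Nat.choose_succ_succ, Nat.choose_one_right,
    Nat.add_comm]

/-- For `n ≥ 1` and compositions `I, J` of `n`, with `I'` the conjugate composition of `I`,
`k̃_{I,J}(q,t) · k̃_{I',J}(q,t) = q^{C(n+1−ℓ(J),2)} t^{C(ℓ(J),2)}` in `ℤ[q,t]`. -/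
theorem kostka_mul_kostka_conjugate {n : ℕ} (hn : 1 ≤ n) (I I' J : Composition n)
    (hI' : Des I' = Finset.Ioo 0 n \ Des I) :
    kostka I J * kostka I' J =
      MvPolynomial.X 0 ^ Nat.choose (n + 1 - J.length) 2 *
        MvPolynomial.X 1 ^ Nat.choose J.length 2 := by
  have hℓpos : 0 < J.length := J.length_pos_of_pos hn
  have hℓle : J.length ≤ n := J.length_le
  have hDJ : Des J ⊆ Finset.Ioo 0 n := des_subset J
  have hcardDJ : (Des J).card = J.length - 1 := card_des J
  -- product over the whole Ioo
  have hdisj : Disjoint (Des I) (Des I') := by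
    rw [hI']; exact Finset.disjoint_sdiff
  have hunion : Des I ∪ Des I' = Finset.Ioo 0 n := by
    rw [hI', Finset.union_sdiff_of_subset (des_subset I)]
  have hprod : kostka I J * kostka I' J = ∏ k ∈ Finset.Ioo 0 n, v J k := by
    rw [kostka, kostka, ← Finset.prod_union hdisj, hunion]
  rw [hprod]
  set T : Finset ℕ := Finset.Ioo 0 n \ Des J with hT
  have hsplit : (∏ k ∈ T, v J k) * ∏ k ∈ Des J, v J k = ∏ k ∈ Finset.Ioo 0 n, v J k :=
    Finset.prod_sdiff hDJ
  rw [← hsplit]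
  have hTcard : T.card = n - J.length := by
    rw [hT, Finset.card_sdiff_of_subset hDJ, Nat.card_Ioo, hcardDJ]
    omega
  -- the t part
  have ht : (∏ k ∈ Des J, v J k) = MvPolynomial.X 1 ^ Nat.choose J.length 2 := by
    have h1 : ∀ k ∈ Des J, v J k = MvPolynomial.X 1 ^ (1 + d J k) := by
      intro k hk; rw [v, if_pos hk]
    rw [Finset.prod_congr rfl h1, Finset.prod_pow_eq_pow_sum]
    congr 1
    rw [Finset.sum_add_distrib, Finset.sum_const, smul_eq_mul, mul_one]
    have : ∑ k ∈ Des J, d J k = (Des J).card.choose 2 := sum_card_filter_lt (Des J)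
    rw [this, hcardDJ]
    obtain ⟨m, hm⟩ : ∃ m, J.length = m + 1 := ⟨J.length - 1, by omega⟩
    rw [hm, Nat.add_sub_cancel, Nat.choose_succ_succ, Nat.choose_one_right]
  -- the q part
  have hq : (∏ k ∈ T, v J k) = MvPolynomial.X 0 ^ Nat.choose (n + 1 - J.length) 2 := by
    have h1 : ∀ k ∈ T, v J k = MvPolynomial.X 0 ^ (T.filter (· ≤ k)).card := by
      intro k hk
      rw [hT, Finset.mem_sdiff, Finset.mem_Ioo] at hk
      obtain ⟨⟨hk0, hkn⟩, hknot⟩ := hk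
      rw [v, if_neg hknot]
      congr 1
      -- k - d J k = card of T.filter (≤ k)
      have key : (Finset.Icc 1 k) = T.filter (· ≤ k) ∪ (Des J).filter (· < k) := by
        ext x
        simp only [Finset.mem_union, Finset.mem_filter, Finset.mem_Icc, hT,
          Finset.mem_sdiff, Finset.mem_Ioo]
        constructor
        · rintro ⟨hx1, hxk⟩
          by_cases hxD : x ∈ Des J
          · refine Or.inr ⟨hxD, lt_of_le_of_ne hxk ?_⟩
            rintro rfl; exact hknot hxD
          · exact Or.inl ⟨⟨⟨hx1, lt_of_le_of_lt hxk hkn⟩, hxD⟩, hxk⟩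
        · rintro (⟨⟨⟨hx0, _⟩, _⟩, hxk⟩ | ⟨hxD, hxk⟩)
          · exact ⟨hx0, hxk⟩
          · have := des_subset J hxD
            rw [Finset.mem_Ioo] at this
            exact ⟨this.1, hxk.le⟩
      have hdisj2 : Disjoint (T.filter (· ≤ k)) ((Des J).filter (· < k)) := by
        apply Finset.disjoint_filter_filter
        rw [hT]; exact Finset.sdiff_disjoint
      have hcard : k = (T.filter (· ≤ k)).card + d J k := by
        have := congrArg Finset.card key
        rw [Nat.card_Icc, Finset.card_union_of_disjoint hdisj2] at this
        rw [d]; omega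
      omega
    rw [Finset.prod_congr rfl h1, Finset.prod_pow_eq_pow_sum]
    congr 1
    rw [sum_card_filter_le, hTcard]
    congr 1
    omega
  rw [hq, ht]
end

section
/- For every n ≥ 1, the determinant of the noncommutative (q,t)-Kostka matrix K_n, the matrix indexed by compositions of n with (I,J) entry ∏_{k ∈ Des(J)} v(I,k), is given in ℤ[q,t] by det K_n(q,t) = ∏_{m=1}^{n−1} ∏_{k=1}^{m} (t^{m+1−k} − q^k)^{2^{n−1−m}·C(m−1,k−1)}, where C(m−1,k−1) is a binomial coefficient. -/
open Finset

namespace KP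

noncomputable abbrev qq : MvPolynomial (Fin 2) ℤ := MvPolynomial.X 0
noncomputable abbrev tt : MvPolynomial (Fin 2) ℤ := MvPolynomial.X 1

def dd {m : ℕ} (S : Finset (Fin m)) (k : Fin m) : ℕ := (S.filter (· < k)).card

noncomputable def w {m : ℕ} (S : Finset (Fin m)) (k : Fin m) : MvPolynomial (Fin 2) ℤ :=
  if k ∈ S then tt ^ (1 + dd S k) else qq ^ ((k : ℕ) + 1 - dd S k)

noncomputable def M (m : ℕ) :
    Matrix (Finset (Fin m)) (Finset (Fin m)) (MvPolynomial (Fin 2) ℤ) :=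
  Matrix.of fun S T => ∏ k ∈ T, w S k

def up {m : ℕ} (S : Finset (Fin m)) : Finset (Fin (m + 1)) := S.map Fin.castSuccEmb

@[simp] lemma mem_up {m : ℕ} {S : Finset (Fin m)} {k : Fin m} :
    k.castSucc ∈ up S ↔ k ∈ S := by
  simp only [up, mem_map]
  constructor
  · rintro ⟨j, hj, h⟩
    have : j = k := Fin.castSucc_injective m h
    rwa [this] at hj
  · exact fun h => ⟨k, h, rfl⟩

@[simp] lemma last_not_mem_up {m : ℕ} {S : Finset (Fin m)} : Fin.last m ∉ up S := by
  simp only [up, mem_map]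
  rintro ⟨j, _, hj⟩
  exact absurd hj (Fin.castSucc_lt_last j).ne

def down {m : ℕ} (S : Finset (Fin (m + 1))) : Finset (Fin m) :=
  univ.filter (fun k => k.castSucc ∈ S)

@[simp] lemma mem_down {m : ℕ} {S : Finset (Fin (m + 1))} {k : Fin m} :
    k ∈ down S ↔ k.castSucc ∈ S := by simp [down]

def es (m : ℕ) : Finset (Fin (m + 1)) ≃ (Finset (Fin m)) ⊕ (Finset (Fin m)) where
  toFun S := if Fin.last m ∈ S then .inr (down S) else .inl (down S)
  invFun x := x.elim up (fun S => insert (Fin.last m) (up S))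
  left_inv S := by
    by_cases h : Fin.last m ∈ S
    · simp only [h, if_pos]
      ext k
      induction k using Fin.lastCases with
      | last => simp [h]
      | cast j => simp [(Fin.castSucc_lt_last j).ne]
    · simp only [h, if_neg, not_false_iff]
      ext k
      induction k using Fin.lastCases with
      | last => simp [h]
      | cast j => simp
  right_inv x := by
    cases x with
    | inl S =>
      simp only [Sum.elim_inl, last_not_mem_up, if_neg, not_false_iff]
      congr 1
      ext k; simp
    | inr S =>
      have h1 : Fin.last m ∈ insert (Fin.last m) (up S) := mem_insert_self _ _
      simp only [Sum.elim_inr, h1, if_pos]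
      congr 1
      ext k
      simp [(Fin.castSucc_lt_last k).ne]

lemma filter_up {m : ℕ} (S : Finset (Fin m)) (k : Fin m) :
    (up S).filter (· < k.castSucc) = up (S.filter (· < k)) := by
  ext a
  induction a using Fin.lastCases with
  | last => simp only [mem_filter, last_not_mem_up, false_and]
  | cast j => simp [Fin.castSucc_lt_castSucc_iff]

lemma dd_up {m : ℕ} (S : Finset (Fin m)) (k : Fin m) :
    dd (up S) k.castSucc = dd S k := by
  rw [dd, filter_up, up, card_map]; rfl

lemma dd_insert {m : ℕ} (S : Finset (Fin m)) (k : Fin m) :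
    dd (insert (Fin.last m) (up S)) k.castSucc = dd S k := by
  rw [dd, filter_insert, if_neg (by simp [Fin.lt_def]), ← dd, dd_up]

lemma w_up {m : ℕ} (S : Finset (Fin m)) (k : Fin m) :
    w (up S) k.castSucc = w S k := by
  unfold w
  rw [dd_up]
  by_cases h : k ∈ S
  · rw [if_pos h, if_pos (mem_up.2 h)]
  · rw [if_neg h, if_neg (fun hc => h (mem_up.1 hc)), Fin.coe_castSucc]

lemma w_insert {m : ℕ} (S : Finset (Fin m)) (k : Fin m) :
    w (insert (Fin.last m) (up S)) k.castSucc = w S k := by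
  unfold w
  rw [dd_insert]
  have hmem : k.castSucc ∈ insert (Fin.last m) (up S) ↔ k ∈ S := by
    simp [(Fin.castSucc_lt_last k).ne]
  by_cases h : k ∈ S
  · rw [if_pos h, if_pos (hmem.2 h)]
  · rw [if_neg h, if_neg (fun hc => h (hmem.1 hc)), Fin.coe_castSucc]

lemma dd_up_last {m : ℕ} (S : Finset (Fin m)) : dd (up S) (Fin.last m) = S.card := by
  rw [dd, filter_true_of_mem, up, card_map]
  intro x hx
  induction x using Fin.lastCases with
  | last => exact absurd hx last_not_mem_up
  | cast j => exact Fin.castSucc_lt_last j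

lemma dd_insert_last {m : ℕ} (S : Finset (Fin m)) :
    dd (insert (Fin.last m) (up S)) (Fin.last m) = S.card := by
  rw [dd, filter_insert, if_neg (lt_irrefl _), ← dd, dd_up_last]

lemma w_up_last {m : ℕ} (S : Finset (Fin m)) :
    w (up S) (Fin.last m) = qq ^ (m + 1 - S.card) := by
  rw [w, if_neg last_not_mem_up, dd_up_last, Fin.val_last]

lemma w_insert_last {m : ℕ} (S : Finset (Fin m)) :
    w (insert (Fin.last m) (up S)) (Fin.last m) = tt ^ (1 + S.card) := by
  rw [w, if_pos (mem_insert_self _ _), dd_insert_last]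

noncomputable def Dq (m : ℕ) :
    Matrix (Finset (Fin m)) (Finset (Fin m)) (MvPolynomial (Fin 2) ℤ) :=
  Matrix.diagonal fun S => qq ^ (m + 1 - S.card)

noncomputable def Dt (m : ℕ) :
    Matrix (Finset (Fin m)) (Finset (Fin m)) (MvPolynomial (Fin 2) ℤ) :=
  Matrix.diagonal fun S => tt ^ (1 + S.card)

lemma M_succ_block (m : ℕ) :
    (M (m + 1)).submatrix (es m).symm (es m).symm =
      Matrix.fromBlocks (M m) (Dq m * M m) (M m) (Dt m * M m) := by
  apply Matrix.ext
  intro x y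
  have hsl : ∀ S : Finset (Fin m), (es m).symm (.inl S) = up S := fun S => rfl
  have hsr : ∀ S : Finset (Fin m),
      (es m).symm (.inr S) = insert (Fin.last m) (up S) := fun S => rfl
  cases x with
  | inl S =>
    cases y with
    | inl T =>
      simp only [Matrix.submatrix_apply, hsl, Matrix.fromBlocks_apply₁₁]
      show ∏ k ∈ up T, w (up S) k = ∏ k ∈ T, w S k
      rw [up, prod_map]
      exact Finset.prod_congr rfl fun k _ => w_up S k
    | inr T =>
      simp only [Matrix.submatrix_apply, hsl, hsr, Matrix.fromBlocks_apply₁₂, Dq,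
        Matrix.diagonal_mul]
      show ∏ k ∈ insert (Fin.last m) (up T), w (up S) k = _
      rw [prod_insert last_not_mem_up, w_up_last, up, prod_map]
      congr 1
      exact Finset.prod_congr rfl fun k _ => w_up S k
  | inr S =>
    cases y with
    | inl T =>
      simp only [Matrix.submatrix_apply, hsl, hsr, Matrix.fromBlocks_apply₂₁]
      show ∏ k ∈ up T, w (insert (Fin.last m) (up S)) k = ∏ k ∈ T, w S k
      rw [up, prod_map]
      exact Finset.prod_congr rfl fun k _ => w_insert S k
    | inr T =>
      simp only [Matrix.submatrix_apply, hsr, Matrix.fromBlocks_apply₂₂, Dt,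
        Matrix.diagonal_mul]
      show ∏ k ∈ insert (Fin.last m) (up T), w (insert (Fin.last m) (up S)) k = _
      rw [prod_insert last_not_mem_up, w_insert_last, up, prod_map]
      congr 1
      exact Finset.prod_congr rfl fun k _ => w_insert S k

lemma det_fromBlocks_same {I : Type*} [DecidableEq I] [Fintype I] {R : Type*} [CommRing R]
    (A B D : Matrix I I R) :
    (Matrix.fromBlocks A B A D).det = A.det * (D - B).det := by
  have key : Matrix.fromBlocks (1 : Matrix I I R) (0 : Matrix I I R) (-1 : Matrix I I R) (1 : Matrix I I R) * Matrix.fromBlocks A B A D =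
      Matrix.fromBlocks A B 0 (D - B) := by
    rw [Matrix.fromBlocks_multiply]
    simp [Matrix.neg_mul, neg_add_eq_sub]
  have h1 : (Matrix.fromBlocks (1 : Matrix I I R) (0 : Matrix I I R) (-1 : Matrix I I R) (1 : Matrix I I R)).det = 1 := by
    rw [Matrix.det_fromBlocks_zero₁₂]
    simp
  have h2 : (Matrix.fromBlocks A B 0 (D - B)).det =
      (Matrix.fromBlocks (1 : Matrix I I R) (0 : Matrix I I R) (-1 : Matrix I I R) (1 : Matrix I I R)).det *
        (Matrix.fromBlocks A B A D).det := by
    rw [← Matrix.det_mul, key]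
  rw [h1, one_mul] at h2
  rw [← h2]
  exact Matrix.det_fromBlocks_zero₂₁ _ _ _

lemma det_M_succ (m : ℕ) :
    (M (m + 1)).det =
      (M m).det ^ 2 *
        ∏ S : Finset (Fin m), (tt ^ (1 + S.card) - qq ^ (m + 1 - S.card)) := by
  have h := Matrix.det_submatrix_equiv_self (es m).symm (M (m + 1))
  rw [← h, M_succ_block, det_fromBlocks_same]
  rw [← Matrix.sub_mul]
  rw [Matrix.det_mul]
  rw [Dt, Dq, Matrix.diagonal_sub, Matrix.det_diagonal]
  ring

lemma prod_card {R : Type*} [CommMonoid R] (m : ℕ) (f : ℕ → R) :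
    (∏ S : Finset (Fin m), f S.card) = ∏ j ∈ range (m + 1), f j ^ Nat.choose m j := by
  rw [← Finset.powerset_univ, Finset.prod_powerset]
  rw [card_univ, Fintype.card_fin]
  refine Finset.prod_congr rfl fun j _ => ?_
  rw [Finset.prod_congr rfl (fun T hT => by
    rw [(Finset.mem_powersetCard.1 hT).2]), Finset.prod_const,
    Finset.card_powersetCard, card_univ, Fintype.card_fin]

noncomputable def P (m : ℕ) : MvPolynomial (Fin 2) ℤ :=
  ∏ j ∈ Icc 1 m, ∏ k ∈ Icc 1 j,
    (tt ^ (j + 1 - k) - qq ^ k) ^ (2 ^ (m - j) * Nat.choose (j - 1) (k - 1))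

lemma P_succ (m : ℕ) :
    P (m + 1) = P m ^ 2 *
      ∏ j ∈ range (m + 1), (tt ^ (1 + j) - qq ^ (m + 1 - j)) ^ Nat.choose m j := by
  rw [P, Finset.prod_Icc_succ_top (Nat.one_le_iff_ne_zero.2 (Nat.succ_ne_zero m))]
  congr 1
  · rw [P, ← Finset.prod_pow]
    refine Finset.prod_congr rfl fun j hj => ?_
    rw [← Finset.prod_pow]
    refine Finset.prod_congr rfl fun k _ => ?_
    rw [← pow_mul]
    congr 1
    have hj' : j ≤ m := (Finset.mem_Icc.1 hj).2
    have h : m + 1 - j = (m - j) + 1 := by omega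
    rw [h, pow_succ]
    ring
  · refine Finset.prod_nbij' (fun k => m + 1 - k) (fun j => m + 1 - j) ?_ ?_ ?_ ?_ ?_
    · intro k hk
      have := Finset.mem_Icc.1 hk
      exact Finset.mem_range.2 (by omega)
    · intro j hj
      have := Finset.mem_range.1 hj
      exact Finset.mem_Icc.2 (by omega)
    · intro k hk; have := Finset.mem_Icc.1 hk; omega
    · intro j hj; have := Finset.mem_range.1 hj; omega
    · intro k hk
      have hk' := Finset.mem_Icc.1 hk
      have h2 : 1 + (m + 1 - k) = m + 1 + 1 - k := by omega
      have h3 : m + 1 - 1 = m := by omega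
      have h4 : m + 1 - (m + 1 - k) = k := by omega
      have h5 : m + 1 - (m + 1) = 0 := by omega
      have h6 : m - (k - 1) = m + 1 - k := by omega
      have h7 : Nat.choose m (m + 1 - k) = Nat.choose m (k - 1) := by
        rw [← h6, Nat.choose_symm (by omega)]
      rw [h2, h3, h4, h5, h7, pow_zero, one_mul]

lemma det_M (m : ℕ) : (M m).det = P m := by
  induction m with
  | zero =>
    haveI : Unique (Finset (Fin 0)) :=
      ⟨⟨∅⟩, fun s => Finset.eq_empty_of_isEmpty s⟩
    rw [Matrix.det_unique]
    simp only [M, Matrix.of_apply]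
    have key : ∀ s : Finset (Fin 0), ∏ k ∈ s, w s k = P 0 := by
      intro s
      rw [Finset.eq_empty_of_isEmpty s, Finset.prod_empty, P,
        Finset.Icc_eq_empty (by omega), Finset.prod_empty]
    exact key _
  | succ m ih =>
    rw [det_M_succ, ih, P_succ]
    congr 1
    rw [← prod_card m (fun j => tt ^ (1 + j) - qq ^ (m + 1 - j))]


noncomputable def E (n : ℕ) : Composition n ≃ Finset (Fin (n - 1)) :=
  (compositionEquiv n).trans (compositionAsSetEquiv n)

lemma mem_boundaries_iff {n : ℕ} (I : Composition n) (j : Fin (n + 1)) :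
    j ∈ I.boundaries ↔ ∃ l : ℕ, l ≤ I.length ∧ I.sizeUpTo l = (j : ℕ) := by
  rw [Composition.boundaries, Finset.mem_map]
  constructor
  · rintro ⟨l, -, hl⟩
    refine ⟨(l : ℕ), Nat.lt_succ_iff.1 l.isLt, ?_⟩
    rw [← hl]
    rfl
  · rintro ⟨l, hl, hval⟩
    refine ⟨⟨l, Nat.lt_succ_iff.2 hl⟩, Finset.mem_univ _, ?_⟩
    exact Fin.ext hval

lemma mem_E_iff {n : ℕ} (hn : 1 ≤ n) (I : Composition n) (i : Fin (n - 1)) :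
    i ∈ E n I ↔ ((i : ℕ) + 1) ∈ Des I := by
  have hilt : (i : ℕ) < n - 1 := i.isLt
  show i ∈ compositionAsSetEquiv n (I.toCompositionAsSet) ↔ _
  rw [compositionAsSetEquiv]
  simp only [Equiv.coe_fn_mk, Set.toFinset_setOf, Finset.mem_filter, Finset.mem_univ, true_and]
  rw [show I.toCompositionAsSet.boundaries = I.boundaries from rfl]
  rw [mem_boundaries_iff]
  simp only [Des, Finset.mem_image, Finset.mem_Ioo]
  constructor
  · rintro ⟨l, hl, hval⟩
    have h0 : l ≠ 0 := by
      intro h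
      rw [h, Composition.sizeUpTo_zero] at hval
      omega
    have hlen : l ≠ I.length := by
      intro h
      rw [h, Composition.sizeUpTo_length] at hval
      omega
    exact ⟨l, ⟨Nat.pos_of_ne_zero h0, lt_of_le_of_ne hl hlen⟩, by omega⟩
  · rintro ⟨l, ⟨h0, hlen⟩, hval⟩
    exact ⟨l, le_of_lt hlen, by omega⟩

lemma mem_Des_bounds {n : ℕ} (I : Composition n) {k : ℕ} (hk : k ∈ Des I) :
    0 < k ∧ k < n := by
  simp only [Des, Finset.mem_image, Finset.mem_Ioo] at hk
  obtain ⟨l, ⟨h0, hlen⟩, hval⟩ := hk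
  constructor
  · have h1 : I.sizeUpTo 0 < I.sizeUpTo 1 := I.sizeUpTo_strict_mono (by omega)
    have h2 : I.sizeUpTo 1 ≤ I.sizeUpTo l := I.monotone_sizeUpTo (by omega)
    rw [Composition.sizeUpTo_zero] at h1
    omega
  · have h1 : I.sizeUpTo l < I.sizeUpTo (l + 1) := I.sizeUpTo_strict_mono hlen
    have h2 : I.sizeUpTo (l + 1) ≤ I.sizeUpTo I.length := I.monotone_sizeUpTo (by omega)
    rw [Composition.sizeUpTo_length] at h2
    omega

lemma Des_eq {n : ℕ} (hn : 1 ≤ n) (I : Composition n) :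
    Des I = (E n I).image (fun i : Fin (n - 1) => (i : ℕ) + 1) := by
  ext k
  simp only [Finset.mem_image]
  constructor
  · intro hk
    obtain ⟨hk0, hkn⟩ := mem_Des_bounds I hk
    refine ⟨⟨k - 1, by omega⟩, ?_, by simp only [Fin.val_mk]; omega⟩
    rw [mem_E_iff hn]
    simpa only [show k - 1 + 1 = k by omega] using hk
  · rintro ⟨i, hi, rfl⟩
    exact (mem_E_iff hn I i).1 hi

lemma succ_inj' {n : ℕ} : Function.Injective (fun i : Fin (n - 1) => (i : ℕ) + 1) := by
  intro a b h
  simp only [add_left_inj] at h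
  exact Fin.ext h

lemma d_eq {n : ℕ} (hn : 1 ≤ n) (I : Composition n) (i : Fin (n - 1)) :
    d I ((i : ℕ) + 1) = dd (E n I) i := by
  rw [d, Des_eq hn, Finset.filter_image, Finset.card_image_of_injective _ succ_inj', dd]
  congr 1
  apply Finset.filter_congr
  intro j _
  rw [Fin.lt_def]
  omega

lemma v_eq_w {n : ℕ} (hn : 1 ≤ n) (I : Composition n) (i : Fin (n - 1)) :
    v I ((i : ℕ) + 1) = w (E n I) i := by
  rw [v, w, d_eq hn]
  by_cases h : i ∈ E n I
  · rw [if_pos ((mem_E_iff hn I i).1 h), if_pos h]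
  · rw [if_neg (fun hc => h ((mem_E_iff hn I i).2 hc)), if_neg h]

lemma entry_eq {n : ℕ} (hn : 1 ≤ n) (I J : Composition n) :
    ∏ k ∈ Des J, v I k = M (n - 1) (E n I) (E n J) := by
  rw [Des_eq hn J, Finset.prod_image (fun a _ b _ h => succ_inj' h)]
  show _ = ∏ i ∈ E n J, w (E n I) i
  exact Finset.prod_congr rfl fun i _ => v_eq_w hn I i

end KP

/-- The determinant of the noncommutative `(q,t)`-Kostka matrix `K_n`, with `(I,J)` entry
`∏_{k ∈ Des J} v(I,k)`, equals
`∏_{m=1}^{n−1} ∏_{k=1}^{m} (t^{m+1−k} − q^k)^{2^{n−1−m}·C(m−1,k−1)}`. -/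
theorem det_kostka_matrix {n : ℕ} (hn : 1 ≤ n) :
    Matrix.det (Matrix.of fun I J : Composition n => ∏ k ∈ Des J, v I k) =
      ∏ m ∈ Finset.Icc 1 (n - 1), ∏ k ∈ Finset.Icc 1 m,
        ((MvPolynomial.X 1 : MvPolynomial (Fin 2) ℤ) ^ (m + 1 - k) -
            MvPolynomial.X 0 ^ k) ^ (2 ^ (n - 1 - m) * Nat.choose (m - 1) (k - 1)) := by
  have heq : (Matrix.of fun I J : Composition n => ∏ k ∈ Des J, v I k) =
      (KP.M (n - 1)).submatrix (KP.E n) (KP.E n) := by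
    apply Matrix.ext
    intro I J
    exact KP.entry_eq hn I J
  rw [heq, Matrix.det_submatrix_equiv_self (KP.E n), KP.det_M, KP.P]
end

section
/- For every n ≥ 1, the determinant of the multiparameter noncommutative Kostka matrix K_n(Q,T), the matrix indexed by compositions of n with (I,J) entry ∏_{k ∈ Des(J)} ṽ(I,k), is given in the polynomial ring ℤ[q_1,…,q_{n−1},t_1,…,t_{n−1}] by det K_n(Q,T) = ∏_{m=1}^{n−1} ∏_{k=1}^{m} (t_{m+1−k} − q_k)^{2^{n−1−m}·C(m−1,k−1)}, where C(m−1,k−1) is a binomial coefficient. -/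
open Finset

/-- The multiparameter `ṽ(I,k)`: `t_{1+d(I,k)}` if `k ∈ Des I`, `q_{k−d(I,k)}` otherwise,
in the polynomial ring with indeterminates `q_j = X (false, j)` and `t_i = X (true, i)`. -/
noncomputable def vMulti {n : ℕ} (I : Composition n) (k : ℕ) :
    MvPolynomial (Bool × ℕ) ℤ :=
  if k ∈ Des I then MvPolynomial.X (true, 1 + d I k)
  else MvPolynomial.X (false, k - d I k)

noncomputable def vS (S : Finset ℕ) (k : ℕ) : MvPolynomial (Bool × ℕ) ℤ :=
  if k ∈ S then MvPolynomial.X (true, 1 + (S.filter (· < k)).card)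
  else MvPolynomial.X (false, k - (S.filter (· < k)).card)

lemma vS_insert_of_lt {a k : ℕ} (h : k < a) (S : Finset ℕ) :
    vS (insert a S) k = vS S k := by
  have h1 : ¬ a < k := by omega
  have h2 : k ≠ a := by omega
  simp [vS, Finset.filter_insert, h1, Finset.mem_insert, h2]

lemma vS_top_mem {a : ℕ} (S : Finset ℕ) (hS : ∀ x ∈ S, x < a) :
    vS (insert a S) a = MvPolynomial.X (true, 1 + S.card) := by
  have h1 : ¬ a < a := lt_irrefl a
  have h2 : S.filter (· < a) = S := Finset.filter_true_of_mem hS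
  simp [vS, Finset.filter_insert, h1, h2]

lemma vS_top_not_mem {a : ℕ} (S : Finset ℕ) (ha : a ∉ S) (hS : ∀ x ∈ S, x < a) :
    vS S a = MvPolynomial.X (false, a - S.card) := by
  have h2 : S.filter (· < a) = S := Finset.filter_true_of_mem hS
  simp [vS, ha, h2]

section
variable {m : ℕ}

def liftF {m : ℕ} (S : Finset (Fin m)) : Finset ℕ :=
  S.image fun i : Fin m => (i : ℕ) + 1

lemma liftF_inj : Function.Injective (fun i : Fin m => (i : ℕ) + 1) := by
  intro a b h
  simp only at h
  exact Fin.ext (by omega)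

lemma liftF_card (S : Finset (Fin m)) : (liftF S).card = S.card :=
  Finset.card_image_of_injective _ liftF_inj

lemma liftF_lt (S : Finset (Fin m)) : ∀ x ∈ liftF S, x < m + 1 := by
  intro x hx
  simp only [liftF, Finset.mem_image] at hx
  obtain ⟨i, _, rfl⟩ := hx
  have := i.isLt
  omega

lemma liftF_not_mem_top (S : Finset (Fin m)) : m + 1 ∉ liftF S := by
  intro h; exact absurd (liftF_lt S _ h) (lt_irrefl _)

lemma liftF_castSucc (S : Finset (Fin m)) :
    liftF (S.image Fin.castSucc) = liftF S := by
  simp [liftF, Finset.image_image, Function.comp_def]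

lemma liftF_insert_last (S : Finset (Fin m)) :
    liftF (insert (Fin.last m) (S.image Fin.castSucc)) = insert (m + 1) (liftF S) := by
  simp only [liftF, Finset.image_insert, Finset.image_image, Function.comp_def]
  norm_num

end

noncomputable def Mmat (m : ℕ) :
    Matrix (Finset (Fin m)) (Finset (Fin m)) (MvPolynomial (Bool × ℕ) ℤ) :=
  Matrix.of fun S T => ∏ k ∈ T, vS (liftF S) ((k : ℕ) + 1)

section
variable {m : ℕ}

lemma last_not_mem_image (T : Finset (Fin m)) :
    Fin.last m ∉ T.image Fin.castSucc := by
  intro h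
  simp only [Finset.mem_image] at h
  obtain ⟨i, _, hi⟩ := h
  exact absurd hi (Fin.castSucc_lt_last i).ne

/-- the splitting equiv -/
noncomputable def splitE (m : ℕ) :
    Finset (Fin m) ⊕ Finset (Fin m) ≃ Finset (Fin (m + 1)) :=
  Equiv.ofBijective
    (Sum.elim (fun S : Finset (Fin m) => S.image Fin.castSucc)
      (fun S : Finset (Fin m) => insert (Fin.last m) (S.image Fin.castSucc)))
    (by
      rw [Fintype.bijective_iff_injective_and_card]
      constructor
      · have himg : Function.Injective fun S : Finset (Fin m) => S.image Fin.castSucc :=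
          Finset.image_injective (Fin.castSucc_injective m)
        rintro (S | S) (T | T) h <;> simp only [Sum.elim_inl, Sum.elim_inr] at h
        · exact congrArg _ (himg h)
        · exact absurd (h ▸ Finset.mem_insert_self (Fin.last m) _) (last_not_mem_image S)
        · exact absurd (h.symm ▸ Finset.mem_insert_self (Fin.last m) _) (last_not_mem_image T)
        · refine congrArg _ (himg ?_)
          have := congrArg (fun X => Finset.erase X (Fin.last m)) h
          simpa [Finset.erase_insert (last_not_mem_image S),
            Finset.erase_insert (last_not_mem_image T)] using this
      · simp only [Fintype.card_sum, Fintype.card_finset, Fintype.card_fin]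
        ring)

@[simp] lemma splitE_inl (S : Finset (Fin m)) :
    splitE m (Sum.inl S) = S.image Fin.castSucc := rfl

@[simp] lemma splitE_inr (S : Finset (Fin m)) :
    splitE m (Sum.inr S) = insert (Fin.last m) (S.image Fin.castSucc) := rfl

lemma prod_image_castSucc (R : Finset ℕ) (T : Finset (Fin m)) :
    ∏ k ∈ T.image Fin.castSucc, vS R ((k : ℕ) + 1) = ∏ k ∈ T, vS R ((k : ℕ) + 1) := by
  rw [Finset.prod_image (fun a _ b _ h => Fin.castSucc_injective m h)]
  simp

lemma submatrix_splitE (m : ℕ) :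
    (Mmat (m + 1)).submatrix (splitE m) (splitE m) =
      Matrix.fromBlocks (Mmat m)
        (Matrix.diagonal (fun S : Finset (Fin m) =>
          (MvPolynomial.X (false, m + 1 - S.card) : MvPolynomial (Bool × ℕ) ℤ)) * Mmat m)
        (Mmat m)
        (Matrix.diagonal (fun S : Finset (Fin m) =>
          (MvPolynomial.X (true, 1 + S.card) : MvPolynomial (Bool × ℕ) ℤ)) * Mmat m) := by
  have hrow : ∀ (S T : Finset (Fin m)),
      ∏ k ∈ T, vS (insert (m + 1) (liftF S)) ((k : ℕ) + 1)
        = ∏ k ∈ T, vS (liftF S) ((k : ℕ) + 1) := by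
    intro S T
    refine Finset.prod_congr rfl fun k _ => ?_
    exact vS_insert_of_lt (by have := k.isLt; omega) _
  apply Matrix.ext
  rintro (S | S) (T | T) <;>
    simp only [Matrix.submatrix_apply, splitE_inl, splitE_inr, Mmat, Matrix.of_apply,
      Matrix.fromBlocks_apply₁₁, Matrix.fromBlocks_apply₁₂, Matrix.fromBlocks_apply₂₁,
      Matrix.fromBlocks_apply₂₂, Matrix.diagonal_mul]
  · rw [liftF_castSucc, prod_image_castSucc]
  · rw [liftF_castSucc, Finset.prod_insert (last_not_mem_image T), prod_image_castSucc]
    congr 1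
    have : ((Fin.last m : ℕ) + 1) = m + 1 := by simp
    rw [this, vS_top_not_mem _ (liftF_not_mem_top S) (liftF_lt S), liftF_card]
  · rw [liftF_insert_last, prod_image_castSucc, hrow S T]
  · rw [liftF_insert_last, Finset.prod_insert (last_not_mem_image T)]
    have h1 : ((Fin.last m : ℕ) + 1) = m + 1 := by simp
    rw [h1, vS_top_mem _ (liftF_lt S), liftF_card, prod_image_castSucc, hrow S T]

end

lemma det_Mmat_succ (m : ℕ) :
    (Mmat (m + 1)).det = (Mmat m).det ^ 2 *
      ∏ S : Finset (Fin m),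
        ((MvPolynomial.X (true, 1 + S.card) : MvPolynomial (Bool × ℕ) ℤ) -
          MvPolynomial.X (false, m + 1 - S.card)) := by
  set D0 : Matrix (Finset (Fin m)) (Finset (Fin m)) (MvPolynomial (Bool × ℕ) ℤ) :=
    Matrix.diagonal (fun S : Finset (Fin m) =>
      (MvPolynomial.X (false, m + 1 - S.card) : MvPolynomial (Bool × ℕ) ℤ)) with hD0
  set D1 : Matrix (Finset (Fin m)) (Finset (Fin m)) (MvPolynomial (Bool × ℕ) ℤ) :=
    Matrix.diagonal (fun S : Finset (Fin m) =>
      (MvPolynomial.X (true, 1 + S.card) : MvPolynomial (Bool × ℕ) ℤ)) with hD1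
  have h1 : (Mmat (m + 1)).det = ((Mmat (m + 1)).submatrix (splitE m) (splitE m)).det :=
    (Matrix.det_submatrix_equiv_self _ _).symm
  rw [h1, submatrix_splitE]
  have factor : Matrix.fromBlocks (Mmat m) (D0 * Mmat m) (Mmat m) (D1 * Mmat m) =
      Matrix.fromBlocks 1 0 1 1 *
        Matrix.fromBlocks (Mmat m) (D0 * Mmat m) 0 ((D1 - D0) * Mmat m) := by
    rw [Matrix.fromBlocks_multiply]
    simp [Matrix.sub_mul, add_sub_cancel]
  rw [factor, Matrix.det_mul, Matrix.det_fromBlocks_zero₁₂, Matrix.det_fromBlocks_zero₂₁,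
    Matrix.det_mul]
  have hdiag : (D1 - D0).det = ∏ S : Finset (Fin m),
      ((MvPolynomial.X (true, 1 + S.card) : MvPolynomial (Bool × ℕ) ℤ) -
        MvPolynomial.X (false, m + 1 - S.card)) := by
    rw [hD1, hD0, Matrix.diagonal_sub, Matrix.det_diagonal]
  rw [hdiag]
  simp [Matrix.det_one]
  ring

lemma prod_card_finset {β : Type*} [CommMonoid β] (m : ℕ) (f : ℕ → β) :
    ∏ S : Finset (Fin m), f S.card = ∏ j ∈ Finset.range (m + 1), f j ^ Nat.choose m j := by
  rw [← Finset.prod_fiberwise_of_maps_to (g := fun S : Finset (Fin m) => S.card)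
    (t := Finset.range (m + 1)) (fun S _ => by
      simp only [Finset.mem_range]
      exact Nat.lt_succ_of_le (by simpa using Finset.card_le_univ S))]
  refine Finset.prod_congr rfl fun j hj => ?_
  have hfilter : (Finset.univ.filter fun S : Finset (Fin m) => S.card = j) =
      Finset.powersetCard j (Finset.univ : Finset (Fin m)) := by
    ext S
    simp [Finset.mem_powersetCard_univ]
  calc ∏ S ∈ Finset.univ.filter (fun S : Finset (Fin m) => S.card = j), f S.card
      = ∏ _S ∈ Finset.univ.filter (fun S : Finset (Fin m) => S.card = j), f j := by
        refine Finset.prod_congr rfl fun S hS => ?_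
        simp only [Finset.mem_filter] at hS
        rw [hS.2]
    _ = f j ^ Nat.choose m j := by
        rw [Finset.prod_const, hfilter, Finset.card_powersetCard]
        simp

lemma det_Mmat (m : ℕ) :
    (Mmat m).det = ∏ l ∈ Finset.Icc 1 m, ∏ k ∈ Finset.Icc 1 l,
      ((MvPolynomial.X (true, l + 1 - k) : MvPolynomial (Bool × ℕ) ℤ) -
        MvPolynomial.X (false, k)) ^ (2 ^ (m - l) * Nat.choose (l - 1) (k - 1)) := by
  induction m with
  | zero =>
      have hd : ∀ s : Finset (Fin 0), s = ∅ := fun s => by ext x; exact x.elim0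
      have hone : Mmat 0 = 1 := by
        apply Matrix.ext
        intro S T
        rw [hd S, hd T]
        simp [Mmat, Matrix.one_apply]
      rw [hone, Matrix.det_one]
      simp
  | succ m ih =>
      rw [det_Mmat_succ, ih]
      rw [prod_card_finset m (fun j =>
        ((MvPolynomial.X (true, 1 + j) : MvPolynomial (Bool × ℕ) ℤ) -
          MvPolynomial.X (false, m + 1 - j)))]
      rw [Finset.prod_Icc_succ_top (by omega : 1 ≤ m + 1)]
      congr 1
      · -- squared part
        rw [← Finset.prod_pow]
        refine Finset.prod_congr rfl fun l hl => ?_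
        rw [← Finset.prod_pow]
        refine Finset.prod_congr rfl fun k hk => ?_
        rw [← pow_mul]
        congr 1
        simp only [Finset.mem_Icc] at hl hk
        have : m + 1 - l = (m - l) + 1 := by omega
        rw [this]
        ring
      · -- new factor
        refine Finset.prod_bij' (fun j _ => m + 1 - j) (fun k _ => m + 1 - k)
          ?_ ?_ ?_ ?_ ?_
        · intro j hj
          simp only [Finset.mem_range] at hj
          simp only [Finset.mem_Icc]
          omega
        · intro k hk
          simp only [Finset.mem_Icc] at hk
          simp only [Finset.mem_range]
          omega
        · intro j hj
          simp only [Finset.mem_range] at hj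
          show m + 1 - (m + 1 - j) = j
          omega
        · intro k hk
          simp only [Finset.mem_Icc] at hk
          show m + 1 - (m + 1 - k) = k
          omega
        · intro j hj
          simp only [Finset.mem_range] at hj
          show ((MvPolynomial.X (true, 1 + j) : MvPolynomial (Bool × ℕ) ℤ) -
                MvPolynomial.X (false, m + 1 - j)) ^ Nat.choose m j
              = ((MvPolynomial.X (true, m + 1 + 1 - (m + 1 - j)) : MvPolynomial (Bool × ℕ) ℤ) -
                MvPolynomial.X (false, m + 1 - j)) ^
                (2 ^ (m + 1 - (m + 1)) * Nat.choose (m + 1 - 1) (m + 1 - j - 1))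
          rw [show m + 1 + 1 - (m + 1 - j) = 1 + j by omega,
            show m + 1 - (m + 1) = 0 by omega, pow_zero, one_mul,
            show m + 1 - j - 1 = m - j by omega,
            show m + 1 - 1 = m by omega,
            Nat.choose_symm (show j ≤ m by omega)]
lemma vMulti_eq_vS {n : ℕ} (I : Composition n) (k : ℕ) : vMulti I k = vS (Des I) k := rfl

lemma Des_bounds {n : ℕ} (I : Composition n) {x : ℕ} (hx : x ∈ Des I) : 0 < x ∧ x < n := by
  simp only [Des, Finset.mem_image, Finset.mem_Ioo] at hx
  obtain ⟨idx, ⟨h0, hl⟩, rfl⟩ := hx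
  constructor
  · calc 0 = I.sizeUpTo 0 := (I.sizeUpTo_zero).symm
      _ < I.sizeUpTo 1 := I.sizeUpTo_strict_mono (by omega)
      _ ≤ I.sizeUpTo idx := I.monotone_sizeUpTo (by omega)
  · calc I.sizeUpTo idx < I.sizeUpTo (idx + 1) := I.sizeUpTo_strict_mono hl
      _ ≤ n := I.sizeUpTo_le _

/-- the descent-set equiv -/
noncomputable def DesE (n : ℕ) : Composition n ≃ Finset (Fin (n - 1)) :=
  (compositionEquiv n).trans (compositionAsSetEquiv n)

lemma mem_DesE {n : ℕ} (I : Composition n) (i : Fin (n - 1)) :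
    i ∈ DesE n I ↔ (i : ℕ) + 1 ∈ Des I := by
  have hin : (i : ℕ) < n - 1 := i.isLt
  have hbound : i ∈ DesE n I ↔
      ∃ idx : Fin (I.length + 1), I.sizeUpTo idx = 1 + (i : ℕ) := by
    simp only [DesE, Equiv.trans_apply, compositionAsSetEquiv, compositionEquiv,
      Equiv.coe_fn_mk, Set.mem_toFinset, Set.mem_setOf_eq]
    constructor
    · intro h
      have h' := h
      rw [show (Composition.toCompositionAsSet I).boundaries = I.boundaries from rfl] at h'
      simp only [Composition.boundaries, Finset.mem_map, Finset.mem_univ, true_and] at h'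
      obtain ⟨idx, hidx⟩ := h'
      refine ⟨idx, ?_⟩
      have := congrArg Fin.val hidx
      simpa [Composition.boundary, Composition.sizeUpTo] using this
    · rintro ⟨idx, hidx⟩
      rw [show (Composition.toCompositionAsSet I).boundaries = I.boundaries from rfl]
      simp only [Composition.boundaries, Finset.mem_map, Finset.mem_univ, true_and]
      refine ⟨idx, ?_⟩
      apply Fin.ext
      simpa [Composition.boundary, Composition.sizeUpTo] using hidx
  rw [hbound]
  constructor
  · rintro ⟨idx, hidx⟩
    simp only [Des, Finset.mem_image, Finset.mem_Ioo]
    refine ⟨idx, ⟨?_, ?_⟩, by omega⟩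
    · by_contra h
      have : (idx : ℕ) = 0 := by omega
      rw [this, I.sizeUpTo_zero] at hidx
      omega
    · by_contra h
      have : I.length ≤ (idx : ℕ) := by omega
      rw [I.sizeUpTo_ofLength_le _ this] at hidx
      omega
  · intro h
    simp only [Des, Finset.mem_image, Finset.mem_Ioo] at h
    obtain ⟨idx, ⟨h0, hl⟩, hidx⟩ := h
    exact ⟨⟨idx, by omega⟩, by simpa using by omega⟩

lemma Des_eq_liftF {n : ℕ} (I : Composition n) : Des I = liftF (DesE n I) := by
  ext x
  simp only [liftF, Finset.mem_image]
  constructor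
  · intro hx
    obtain ⟨h0, hn⟩ := Des_bounds I hx
    refine ⟨⟨x - 1, by omega⟩, ?_, ?_⟩
    · rw [mem_DesE]
      simpa [Nat.sub_add_cancel h0] using hx
    · show x - 1 + 1 = x
      omega
  · rintro ⟨i, hi, rfl⟩
    exact (mem_DesE I i).mp hi

/-- The determinant of the multiparameter noncommutative Kostka matrix `K_n(Q,T)`, with
`(I,J)` entry `∏_{k ∈ Des J} ṽ(I,k)`, equals
`∏_{m=1}^{n−1} ∏_{k=1}^{m} (t_{m+1−k} − q_k)^{2^{n−1−m}·C(m−1,k−1)}`. -/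
theorem det_multiparameter_kostka_matrix {n : ℕ} (hn : 1 ≤ n) :
    Matrix.det (Matrix.of fun I J : Composition n => ∏ k ∈ Des J, vMulti I k) =
      ∏ m ∈ Finset.Icc 1 (n - 1), ∏ k ∈ Finset.Icc 1 m,
        (MvPolynomial.X (true, m + 1 - k) -
            MvPolynomial.X (false, k) : MvPolynomial (Bool × ℕ) ℤ) ^
          (2 ^ (n - 1 - m) * Nat.choose (m - 1) (k - 1)) := by
  have hmat : (Matrix.of fun I J : Composition n => ∏ k ∈ Des J, vMulti I k) =
      (Mmat (n - 1)).submatrix (DesE n) (DesE n) := by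
    apply Matrix.ext
    intro I J
    simp only [Matrix.of_apply, Matrix.submatrix_apply, Mmat]
    rw [Des_eq_liftF J]
    unfold liftF
    rw [Finset.prod_image (fun a _ b _ h => liftF_inj h)]
    refine Finset.prod_congr rfl fun i _ => ?_
    rw [vMulti_eq_vS, Des_eq_liftF I]
    rfl
  rw [hmat, Matrix.det_submatrix_equiv_self, det_Mmat]
end

section
/- Fix n ≥ 2. For a composition L of n−1, let L' be the composition of n obtained by adding 1 to the last part of L (so Des(L') = Des(L) as a subset of {1,…,n−1}) and let L'' be the composition of n obtained by appending a new part 1 at the end of L (so Des(L'') = Des(L) ∪ {n−1}). Then for all compositions L, M of n−1, the entries of K_n satisfy the 2×2 block identities: K_n(L',M') = K_{n−1}(L,M), K_n(L'',M') = K_{n−1}(L,M), K_n(L',M'') = q^{n−ℓ(L)} · K_{n−1}(L,M), and K_n(L'',M'') = t^{ℓ(L)} · K_{n−1}(L,M). In particular K_{n−1} is the submatrix of K_n formed by the rows L'' and columns M'. -/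
open Finset

lemma sizeUpTo_lt_of_lt {m : ℕ} (I : Composition m) {i j : ℕ} (hij : i < j)
    (hj : j ≤ I.length) : I.sizeUpTo i < I.sizeUpTo j :=
  lt_of_lt_of_le (I.sizeUpTo_strict_mono (lt_of_lt_of_le hij hj))
    (I.monotone_sizeUpTo hij)

lemma des_mem {m : ℕ} (I : Composition m) {k : ℕ} (hk : k ∈ Des I) : 0 < k ∧ k < m := by
  simp only [Des, mem_image, mem_Ioo] at hk
  obtain ⟨i, ⟨hi0, hil⟩, rfl⟩ := hk
  constructor
  · have := sizeUpTo_lt_of_lt I hi0 hil.le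
    simpa [Composition.sizeUpTo_zero] using this
  · have := sizeUpTo_lt_of_lt I hil le_rfl
    rwa [I.sizeUpTo_length] at this

lemma card_des_s4 {m : ℕ} (I : Composition m) : (Des I).card = I.length - 1 := by
  have hinj : Set.InjOn I.sizeUpTo (Finset.Ioo 0 I.length) := by
    intro i hi j hj hij
    simp only [coe_Ioo, Set.mem_Ioo] at hi hj
    rcases lt_trichotomy i j with h | h | h
    · exact absurd hij (sizeUpTo_lt_of_lt I h hj.2.le).ne
    · exact h
    · exact absurd hij.symm (sizeUpTo_lt_of_lt I h hi.2.le).ne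
  rw [Des, Finset.card_image_of_injOn hinj, Nat.card_Ioo]
  simp

lemma v_congr {m m' : ℕ} (I : Composition m) (J : Composition m') (h : Des I = Des J)
    (k : ℕ) : v I k = v J k := by
  unfold v d; rw [h]

lemma v_union {n : ℕ} (hn : 2 ≤ n) (L : Composition (n - 1)) (L'' : Composition n)
    (hL'' : Des L'' = Des L ∪ {n - 1}) {k : ℕ} (hk : k < n - 1) : v L'' k = v L k := by
  have hmem : k ∈ Des L'' ↔ k ∈ Des L := by
    simp only [hL'', mem_union, mem_singleton]
    constructor
    · rintro (h | rfl)
      · exact h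
      · omega
    · exact Or.inl
  have hd : d L'' k = d L k := by
    unfold d
    rw [hL'', Finset.filter_union, Finset.filter_singleton, if_neg (by omega)]
    simp
  unfold v
  rw [hd]
  by_cases h : k ∈ Des L
  · rw [if_pos (hmem.mpr h), if_pos h]
  · rw [if_neg (fun hh => h (hmem.mp hh)), if_neg h]

/-- Block structure of `K_n` (with `K_n(I,J) := ∏_{k ∈ Des J} v(I,k)`): for compositions
`L, M` of `n−1`, and `L', L'', M', M''` the compositions of `n` with
`Des L' = Des L`, `Des L'' = Des L ∪ {n−1}` (and similarly for `M`, corresponding to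
adding 1 to the last part, resp. appending a part 1), one has
`K_n(L',M') = K_n(L'',M') = K_{n−1}(L,M)`, `K_n(L',M'') = q^{n−ℓ(L)} K_{n−1}(L,M)` and
`K_n(L'',M'') = t^{ℓ(L)} K_{n−1}(L,M)`. -/
theorem kostka_matrix_block_structure {n : ℕ} (hn : 2 ≤ n)
    (L M : Composition (n - 1)) (L' L'' M' M'' : Composition n)
    (hL' : Des L' = Des L) (hL'' : Des L'' = Des L ∪ {n - 1})
    (hM' : Des M' = Des M) (hM'' : Des M'' = Des M ∪ {n - 1}) :
    (∏ k ∈ Des M', v L' k) = (∏ k ∈ Des M, v L k) ∧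
    (∏ k ∈ Des M', v L'' k) = (∏ k ∈ Des M, v L k) ∧
    (∏ k ∈ Des M'', v L' k) =
      MvPolynomial.X 0 ^ (n - L.length) * (∏ k ∈ Des M, v L k) ∧
    (∏ k ∈ Des M'', v L'' k) =
      MvPolynomial.X 1 ^ L.length * (∏ k ∈ Des M, v L k) := by
  have hnm1 : ∀ k ∈ Des M, k < n - 1 := fun k hk => (des_mem M hk).2
  have hnotin : (n - 1) ∉ Des M := fun h => lt_irrefl _ (hnm1 _ h)
  have hLnotin : (n - 1) ∉ Des L := fun h => lt_irrefl _ ((des_mem L h).2)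
  have hlen_pos : 0 < L.length := L.length_pos_of_pos (by omega)
  have hlen_le : L.length ≤ n - 1 := L.length_le
  have hdL : d L (n - 1) = L.length - 1 := by
    unfold d
    rw [Finset.filter_true_of_mem (fun k hk => (des_mem L hk).2), card_des_s4]
  have hM''ins : Des M'' = insert (n - 1) (Des M) := by
    rw [hM'']; ext x; simp [or_comm]
  refine ⟨?_, ?_, ?_, ?_⟩
  · rw [hM']
    exact Finset.prod_congr rfl fun k _ => v_congr L' L hL' k
  · rw [hM']
    exact Finset.prod_congr rfl fun k hk => v_union hn L L'' hL'' (hnm1 k hk)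
  · rw [hM''ins, Finset.prod_insert hnotin]
    congr 1
    · rw [v_congr L' L hL', v]
      rw [if_neg hLnotin, hdL]
      congr 1
      omega
    · exact Finset.prod_congr rfl fun k _ => v_congr L' L hL' k
  · rw [hM''ins, Finset.prod_insert hnotin]
    congr 1
    · have hdL'' : d L'' (n - 1) = L.length - 1 := by
        unfold d
        rw [hL'', Finset.filter_union, Finset.filter_singleton, if_neg (by omega)]
        rw [Finset.union_empty,
          Finset.filter_true_of_mem (fun k hk => (des_mem L hk).2), card_des_s4]
      rw [v, if_pos (by rw [hL'']; simp), hdL'']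
      congr 1
      omega
    · exact Finset.prod_congr rfl fun k hk => v_union hn L L'' hL'' (hnm1 k hk)
end

section
/- Fix n ≥ 1 and compositions I, J of n. In the ring ℤ[q,q^{−1}] of Laurent polynomials, let k̃_{I,J}(q,q^{−1}) denote the specialization of the Kostka monomial obtained by substituting t = q^{−1}. Then q^{C(ℓ(J),2)} · k̃_{I,J}(q,q^{−1}) is an ordinary polynomial in q (all its exponents are ≥ 0), and its constant term equals 1 if I = J and 0 if I ≠ J. (This expresses the congruence q^{C(ℓ(J),2)} H̃_J(A;q,q^{−1}) ≡ R_J modulo q·𝓛, where 𝓛 is the ℤ[q]-lattice spanned by the ribbons R_I.) -/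
open Finset

/-- The Kostka monomial specialized at `t = q⁻¹`, as a Laurent polynomial in `q`:
`k̃_{I,J}(q,q⁻¹) = ∏_{k ∈ Des I} w(J,k)` where `w(J,k) = q^{−(1+d(J,k))}` if `k ∈ Des J`
and `w(J,k) = q^{k−d(J,k)}` otherwise. -/
noncomputable def w {n : ℕ} (J : Composition n) (k : ℕ) : LaurentPolynomial ℤ :=
  if k ∈ Des J then LaurentPolynomial.T (-(1 + (d J k : ℤ)))
  else LaurentPolynomial.T ((k : ℤ) - d J k)

noncomputable def kostkaSpec {n : ℕ} (I J : Composition n) : LaurentPolynomial ℤ :=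
  ∏ k ∈ Des I, w J k

/-!
Write `ω(k)` (`descentWeight (Des J) k`) for `1 + d(J,k)` when `k ∈ Des J` and for `k - d(J,k)`
otherwise, so that `w(J,k) = q^{-ω(k)}` on the descents of `J` and `q^{ω(k)}` off them. Every
`ω(k)` with `k ≥ 1` is positive, because the descents of `J` below `k` lie in `{1, …, k-1}`, and
summing over the descents of `J` gives `∑_{k ∈ Des J} ω(k) = 1 + 2 + ⋯ + (ℓ(J) - 1) = C(ℓ(J), 2)`.
Hence the factors at common descents of `I` and `J` cancel against `q^{C(ℓ(J),2)}`, leaving `q^e`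
with `e = ∑_{k ∈ Des J ∆ Des I} ω(k)`: a sum of positive terms, which vanishes exactly when
`Des I = Des J`, i.e. when `I = J`.
-/

open LaurentPolynomial
open scoped symmDiff

def descentWeight (D : Finset ℕ) (k : ℕ) : ℤ :=
  if k ∈ D then 1 + #(D.filter (· < k)) else k - #(D.filter (· < k))

theorem sum_card_filter_lt_s9 (D : Finset ℕ) : ∑ k ∈ D, #(D.filter (· < k)) = (#D).choose 2 := by
  induction D using Finset.induction_on_max with
  | empty => simp
  | insert a D hlt ih =>
    have ha : a ∉ D := fun h => lt_irrefl a (hlt a h)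
    have below_a : (insert a D).filter (· < a) = D := by
      ext x
      simp only [mem_filter, mem_insert]
      exact ⟨fun ⟨hx, hxa⟩ => hx.resolve_left hxa.ne, fun hx => ⟨Or.inr hx, hlt x hx⟩⟩
    have below_k : ∀ k ∈ D, (insert a D).filter (· < k) = D.filter (· < k) := fun k hk => by
      rw [filter_insert, if_neg (hlt k hk).not_gt]
    rw [sum_insert ha, card_insert_of_notMem ha, sum_congr rfl fun k hk => by rw [below_k k hk],
      ih, below_a, Nat.choose_succ_succ', Nat.choose_one_right, add_comm]

theorem sum_descentWeight_self (D : Finset ℕ) :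
    ∑ k ∈ D, descentWeight D k = ((#D + 1).choose 2 : ℕ) := by
  rw [sum_congr rfl fun k hk => by rw [descentWeight, if_pos hk], Nat.choose_succ_succ',
    Nat.choose_one_right, ← sum_card_filter_lt_s9]
  push_cast
  rw [sum_add_distrib, sum_const, nsmul_one]

theorem one_le_descentWeight {D : Finset ℕ} (hD : 0 ∉ D) {k : ℕ} (hk : k ≠ 0) :
    1 ≤ descentWeight D k := by
  unfold descentWeight
  split_ifs
  · omega
  · have below_k : D.filter (· < k) ⊆ Ioo 0 k := fun x hx => by
      obtain ⟨hxD, hxk⟩ := mem_filter.1 hx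
      exact mem_Ioo.2 ⟨Nat.pos_of_ne_zero (ne_of_mem_of_not_mem hxD hD), hxk⟩
    have := card_le_card below_k
    rw [Nat.card_Ioo] at this
    omega

theorem Finset.sum_add_sum_ite_mem_neg {ι M : Type*} [DecidableEq ι] [AddCommGroup M]
    (s t : Finset ι) (f : ι → M) :
    ∑ i ∈ s, f i + ∑ i ∈ t, (if i ∈ s then -f i else f i) = ∑ i ∈ s ∆ t, f i := by
  rw [sum_ite, filter_mem_eq_inter, filter_notMem_eq_sdiff, sum_neg_distrib,
    ← sum_inter_add_sum_sdiff s t, inter_comm, Finset.symmDiff_def,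
    sum_union disjoint_sdiff_sdiff]
  abel

theorem LaurentPolynomial.prod_T {ι R : Type*} [CommSemiring R] (s : Finset ι) (f : ι → ℤ) :
    ∏ i ∈ s, (T (f i) : R[T;T⁻¹]) = T (∑ i ∈ s, f i) := by
  classical
  induction s using Finset.induction_on with
  | empty => simp
  | insert a s ha ih => rw [prod_insert ha, sum_insert ha, ih, T_add]

namespace Composition

variable {n : ℕ} (I : Composition n)

theorem sizeUpTo_strictMonoOn : StrictMonoOn I.sizeUpTo (Set.Iic I.length) :=
  fun i hi j hj hij =>
    I.boundary.strictMono (show (⟨i, Nat.lt_succ_of_le hi⟩ : Fin _) < ⟨j, Nat.lt_succ_of_le hj⟩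
      from hij)

theorem zero_notMem_Des : 0 ∉ Des I := by
  simp only [Des, mem_image, mem_Ioo, not_exists, not_and]
  rintro i ⟨hi0, hil⟩ hi
  have := I.sizeUpTo_strictMonoOn (Set.mem_Iic.2 (Nat.zero_le _)) (Set.mem_Iic.2 hil.le) hi0
  rw [sizeUpTo_zero, hi] at this
  exact lt_irrefl 0 this

theorem card_Des : #(Des I) = I.length - 1 := by
  rw [Des, card_image_of_injOn, Nat.card_Ioo, Nat.sub_zero]
  exact I.sizeUpTo_strictMonoOn.injOn.mono fun i hi => Set.mem_Iic.2 (mem_Ioo.1 hi).2.le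

theorem map_valEmbedding_boundaries :
    I.boundaries.map Fin.valEmbedding = insert 0 (insert n (Des I)) := by
  have range_eq : range (I.length + 1) = insert 0 (insert I.length (Ioo 0 I.length)) := by
    ext i
    simp only [mem_range, mem_insert, mem_Ioo]
    omega
  calc I.boundaries.map Fin.valEmbedding = (range (I.length + 1)).image I.sizeUpTo := by
        ext x
        simp only [boundaries, map_map, mem_map, mem_univ, true_and, mem_image, mem_range,
          Fin.exists_iff]
        exact ⟨fun ⟨i, hi, h⟩ => ⟨i, hi, h⟩, fun ⟨i, hi, h⟩ => ⟨i, hi, h⟩⟩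
    _ = insert 0 (insert n (Des I)) := by
        rw [range_eq, image_insert, image_insert, sizeUpTo_zero, sizeUpTo_length, Des]

theorem Des_injective : Function.Injective (Des : Composition n → Finset ℕ) := by
  intro I J h
  apply (compositionEquiv n).injective
  apply CompositionAsSet.ext
  exact map_injective Fin.valEmbedding
    (show I.boundaries.map _ = J.boundaries.map _ by
      rw [map_valEmbedding_boundaries, map_valEmbedding_boundaries, h])

end Composition

theorem w_eq_T {n : ℕ} (J : Composition n) (k : ℕ) :
    w J k = T (if k ∈ Des J then -descentWeight (Des J) k else descentWeight (Des J) k) := by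
  unfold w descentWeight d
  split_ifs <;> rfl

theorem T_choose_length_mul_kostkaSpec {n : ℕ} (I J : Composition n) :
    T (J.length.choose 2 : ℤ) * kostkaSpec I J =
      T (∑ k ∈ Des J ∆ Des I, descentWeight (Des J) k) := by
  have choose_eq : (J.length.choose 2 : ℤ) = ∑ k ∈ Des J, descentWeight (Des J) k := by
    rw [sum_descentWeight_self, J.card_Des]
    cases J.length <;> rfl
  rw [kostkaSpec, choose_eq, prod_congr rfl fun k _ => w_eq_T J k, prod_T, ← T_add,
    sum_add_sum_ite_mem_neg]

theorem one_le_descentWeight_of_mem_symmDiff {D E : Finset ℕ} (hD : 0 ∉ D) (hE : 0 ∉ E) {k : ℕ}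
    (hk : k ∈ D ∆ E) : 1 ≤ descentWeight D k := by
  refine one_le_descentWeight hD ?_
  rintro rfl
  rcases mem_symmDiff.1 hk with ⟨h, -⟩ | ⟨h, -⟩
  exacts [hD h, hE h]

theorem kostkaSpec_polynomial_constantCoeff_general {n : ℕ}
    (I J : Composition n) :
    ∃ p : Polynomial ℤ,
      Polynomial.toLaurent p =
        LaurentPolynomial.T (Nat.choose J.length 2 : ℤ) * kostkaSpec I J ∧
      p.coeff 0 = if I = J then 1 else 0 := by
  set e := ∑ k ∈ Des J ∆ Des I, descentWeight (Des J) k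
  have hpos : ∀ k ∈ Des J ∆ Des I, 0 < descentWeight (Des J) k := fun k hk =>
    one_le_descentWeight_of_mem_symmDiff J.zero_notMem_Des I.zero_notMem_Des hk
  have he_nonneg : 0 ≤ e := sum_nonneg fun k hk => (hpos k hk).le
  have he_eq_zero : e = 0 ↔ I = J := by
    rw [sum_eq_zero_iff_of_nonneg fun k hk => (hpos k hk).le, eq_comm (a := I),
      ← Composition.Des_injective.eq_iff, ← symmDiff_eq_empty, eq_empty_iff_forall_notMem]
    exact ⟨fun h k hk => (hpos k hk).ne' (h k hk), fun h k hk => absurd hk (h k)⟩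
  refine ⟨Polynomial.X ^ e.toNat, ?_, ?_⟩
  · rw [Polynomial.toLaurent_X_pow, Int.toNat_of_nonneg he_nonneg, T_choose_length_mul_kostkaSpec]
  · rw [Polynomial.coeff_X_pow]
    refine if_congr ?_ rfl rfl
    rw [← he_eq_zero]
    omega

/-- `q^{C(ℓ(J),2)} · k̃_{I,J}(q,q⁻¹)` is an ordinary polynomial in `q`, whose constant
term is `1` if `I = J` and `0` otherwise. -/
theorem kostkaSpec_polynomial_constantCoeff {n : ℕ} (hn : 1 ≤ n)
    (I J : Composition n) :
    ∃ p : Polynomial ℤ,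
      Polynomial.toLaurent p =
        LaurentPolynomial.T (Nat.choose J.length 2 : ℤ) * kostkaSpec I J ∧
      p.coeff 0 = if I = J then 1 else 0 :=
  kostkaSpec_polynomial_constantCoeff_general I J
end
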